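/- arXiv:2402.10592 — 4 statements merged into one kernel-verified Lean document; each statement's English description precedes it below -/
import Mathlib

section
/- Let h(u) = u - ln(u) for u ≥ 1. Then h is strictly increasing on [1, ∞), maps [1, ∞) onto [1, ∞), and for every y ≥ 1 its inverse satisfies y + ln(y) ≤ h⁻¹(y) ≤ y + ln(2y). -/
open Real Set

lemma h_mono : StrictMonoOn (fun u : ℝ => u - Real.log u) (Set.Ici 1) := by
  intro a ha b hb hab
  simp only [mem_Ici] at ha hb
  have ha0 : (0:ℝ) < a := lt_of_lt_of_le one_pos ha
  have hb0 : (0:ℝ) < b := lt_of_lt_of_le one_pos hb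
  have h1 : Real.log b - Real.log a = Real.log (b / a) := (Real.log_div hb0.ne' ha0.ne').symm
  have h2 : Real.log (b / a) < b / a - 1 := by
    apply Real.log_lt_sub_one_of_pos (div_pos hb0 ha0)
    intro h
    exact absurd ((div_eq_one_iff_eq ha0.ne').mp h) (ne_of_gt hab)
  have h3 : b / a - 1 ≤ b - a := by
    rw [div_sub_one ha0.ne']
    rw [div_le_iff₀ ha0]
    nlinarith
  simp only
  linarith [h1 ▸ h2]

lemma h_ge (u : ℝ) (hu : 1 ≤ u) : 1 ≤ u - Real.log u := by
  have := Real.log_le_sub_one_of_pos (lt_of_lt_of_le one_pos hu)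
  linarith

/-- `h(u) = u - ln u` is strictly increasing on `[1,∞)`, maps `[1,∞)` onto `[1,∞)`,
and its inverse satisfies `y + ln y ≤ h⁻¹(y) ≤ y + ln (2y)` for `y ≥ 1`. -/
theorem h_strictMono_surj_and_inverse_bounds :
    StrictMonoOn (fun u : ℝ => u - Real.log u) (Set.Ici 1) ∧
    (fun u : ℝ => u - Real.log u) '' (Set.Ici 1) = Set.Ici 1 ∧
    (∀ y : ℝ, 1 ≤ y → ∀ u : ℝ, 1 ≤ u → u - Real.log u = y →
      y + Real.log y ≤ u ∧ u ≤ y + Real.log (2 * y)) := by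
  refine ⟨h_mono, ?_, ?_⟩
  · apply Set.Subset.antisymm
    · rintro x ⟨u, hu, rfl⟩
      exact h_ge u hu
    · intro y hy
      simp only [mem_Ici] at hy
      have h1 : (1:ℝ) ≤ 3 * y := by linarith
      have hy0 : (0:ℝ) < y := lt_of_lt_of_le one_pos hy
      have hcont : ContinuousOn (fun u : ℝ => u - Real.log u) (Set.Icc 1 (3*y)) := by
        apply ContinuousOn.sub continuousOn_id
        apply Real.continuousOn_log.mono
        intro x hx
        simp only [mem_Icc] at hx
        simp only [mem_compl_iff, mem_singleton_iff]
        linarith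
      have key : y ∈ Set.Icc ((fun u : ℝ => u - Real.log u) 1) ((fun u : ℝ => u - Real.log u) (3*y)) := by
        constructor
        · simp [hy]
        · simp only
          have hl3 : Real.log 3 ≤ 2 := by
            have : Real.log 3 ≤ 3 - 1 := Real.log_le_sub_one_of_pos (by norm_num)
            linarith
          have hly : Real.log y ≤ y - 1 := Real.log_le_sub_one_of_pos hy0
          rw [Real.log_mul (by norm_num) hy0.ne']
          linarith
      have := intermediate_value_Icc h1 hcont key
      obtain ⟨u, hu, hyu⟩ := this
      exact ⟨u, hu.1, hyu⟩
  · intro y hy u hu huy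
    have hy0 : (0:ℝ) < y := lt_of_lt_of_le one_pos hy
    have hly : 0 ≤ Real.log y := Real.log_nonneg hy
    have hly1 : Real.log y ≤ y - 1 := Real.log_le_sub_one_of_pos hy0
    have hl2 : Real.log 2 ≤ 1 := by
      have : Real.log 2 ≤ 2 - 1 := Real.log_le_sub_one_of_pos (by norm_num)
      linarith
    have hl2y : Real.log (2 * y) = Real.log 2 + Real.log y :=
      Real.log_mul (by norm_num) hy0.ne'
    constructor
    · -- lower bound: h (y + log y) ≤ y
      by_contra hlt
      push_neg at hlt
      have hv1 : (1:ℝ) ≤ y + Real.log y := by linarith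
      have hmono := h_mono (mem_Ici.mpr hu) (mem_Ici.mpr hv1) hlt
      simp only at hmono
      rw [huy] at hmono
      -- hmono : y < y + log y - log (y + log y)
      have : Real.log y ≤ Real.log (y + Real.log y) :=
        Real.log_le_log hy0 (by linarith)
      linarith
    · by_contra hlt
      push_neg at hlt
      have hv1 : (1:ℝ) ≤ y + Real.log (2 * y) := by
        rw [hl2y]; linarith [Real.log_nonneg (by norm_num : (1:ℝ) ≤ 2)]
      have hmono := h_mono (mem_Ici.mpr hv1) (mem_Ici.mpr hu) hlt
      simp only at hmono
      rw [huy] at hmono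
      -- hmono : y + log(2y) - log(y + log(2y)) < y
      have h1 : y + Real.log (2 * y) ≤ 2 * y := by rw [hl2y]; linarith
      have : Real.log (y + Real.log (2 * y)) ≤ Real.log (2 * y) :=
        Real.log_le_log (by linarith) h1
      linarith
end

section
/- Let h(u) = u - ln(u) for u ≥ 1 and define, for y ≥ h(1/ln(3/2)), the function h̃(y) = exp(1/h⁻¹(y)) · h⁻¹(y). Then h̃(y) ≤ h⁻¹(y) + 2(e^{1/2} - 1) for all such y. -/
/-- For `h(u) = u - ln u` on `[1,∞)` with inverse `h⁻¹`, and
`h̃(y) = exp(1/h⁻¹(y)) · h⁻¹(y)` for `y ≥ h(1/ln(3/2))`, we have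
`h̃(y) ≤ h⁻¹(y) + 2(e^{1/2} - 1)`. Here the inverse is encoded by any
`u ≥ 1` with `u - ln u = y`. -/
theorem htilde_le_hinv_add (y u : ℝ)
    (hy : (1 / Real.log (3/2)) - Real.log (1 / Real.log (3/2)) ≤ y)
    (hu : 1 ≤ u) (hinv : u - Real.log u = y) :
    Real.exp (1/u) * u ≤ u + 2 * (Real.exp (1/2) - 1) := by
  have hl32 : 0 < Real.log (3/2) := Real.log_pos (by norm_num)
  have hu0 : (0:ℝ) < u := by linarith
  -- log (3/2) ≤ 0.42
  have hlog42 : Real.log (3/2) ≤ 0.42 := by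
    have h1 : ((1:ℝ) + 0.0525)^(8:ℕ) ≤ Real.exp 0.0525 ^ (8:ℕ) :=
      pow_le_pow_left₀ (by norm_num) (by linarith [Real.add_one_le_exp (0.0525:ℝ)]) 8
    have h2 : Real.exp 0.0525 ^ (8:ℕ) = Real.exp 0.42 := by
      rw [← Real.exp_nat_mul]; norm_num
    have h3 : (3/2 : ℝ) ≤ Real.exp 0.42 := by
      rw [← h2]; refine le_trans (by norm_num) h1
    calc Real.log (3/2) ≤ Real.log (Real.exp 0.42) := Real.log_le_log (by norm_num) h3
      _ = 0.42 := Real.log_exp _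
  set a : ℝ := 1 / Real.log (3/2) with ha
  have ha0 : 0 < a := by positivity
  have haub : (1/0.42 : ℝ) ≤ a := one_div_le_one_div_of_le hl32 hlog42
  -- log a ≤ a / e
  have he : (2.7182818283 : ℝ) < Real.exp 1 := Real.exp_one_gt_d9
  have hloga : Real.log a ≤ a / Real.exp 1 := by
    have h1 : Real.log (a / Real.exp 1) ≤ a / Real.exp 1 - 1 :=
      Real.log_le_sub_one_of_pos (by positivity)
    rw [Real.log_div (ne_of_gt ha0) (Real.exp_ne_zero 1), Real.log_exp] at h1
    linarith
  -- y ≥ 3/2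
  have hy32 : (3/2 : ℝ) ≤ y := by
    have hdiv : a / Real.exp 1 ≤ 0.37 * a := by
      rw [div_le_iff₀ (Real.exp_pos 1)]
      nlinarith
    linarith
  -- u ≥ 2
  have hlogu : 1 - 1/u ≤ Real.log u := by
    have h1 : Real.log (1/u) ≤ 1/u - 1 := Real.log_le_sub_one_of_pos (by positivity)
    rw [one_div, Real.log_inv] at h1
    rw [one_div]
    linarith
  have hu2 : 2 ≤ u := by
    by_contra h
    push_neg at h
    have huy : u * y ≤ u * u - u + 1 := by
      have h1 : u * (1 - 1/u) ≤ u * Real.log u :=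
        mul_le_mul_of_nonneg_left hlogu hu0.le
      have h2 : u * (1 - 1/u) = u - 1 := by field_simp
      nlinarith [hinv]
    nlinarith [mul_pos (sub_pos.mpr h) (show (0:ℝ) < u - 1/2 by linarith)]
  -- convexity of exp on [0, 1/2]
  have hx : 1/u ≤ 1/2 := by
    rw [div_le_div_iff₀ hu0 (by norm_num)]; linarith
  have hx0 : 0 < 1/u := by positivity
  have key : Real.exp (1/u) ≤ 1 - 2*(1/u) + 2*(1/u) * Real.exp (1/2) := by
    have hc := convexOn_exp.2 (Set.mem_univ (0:ℝ)) (Set.mem_univ (1/2:ℝ))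
      (show (0:ℝ) ≤ 1 - 2*(1/u) by linarith) (show (0:ℝ) ≤ 2*(1/u) by linarith)
      (show (1 - 2*(1/u)) + 2*(1/u) = 1 by ring)
    simp only [smul_eq_mul, mul_zero, zero_add, Real.exp_zero, mul_one] at hc
    calc Real.exp (1/u) = Real.exp (2*(1/u) * (1/2)) := by ring_nf
      _ ≤ (1 - 2*(1/u)) * 1 + 2*(1/u) * Real.exp (1/2) := by
          simpa using hc
      _ = 1 - 2*(1/u) + 2*(1/u) * Real.exp (1/2) := by ring
  calc Real.exp (1/u) * u ≤ (1 - 2*(1/u) + 2*(1/u) * Real.exp (1/2)) * u :=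
        mul_le_mul_of_nonneg_right key hu0.le
    _ = u + 2 * (Real.exp (1/2) - 1) := by field_simp; ring
end

section
/- Gaussian information balance as p_{I*} → 1: suppose (p_j)_{j≠I*} are positive numbers summing to 1 - p_{I*} satisfying the Gaussian information-balance equations (θ_{I*} - θ_i)²/(σ²/p_{I*} + σ²/p_i) = (θ_{I*} - θ_j)²/(σ²/p_{I*} + σ²/p_j) for all i, j ≠ I*, with θ_{I*} > θ_j for all j ≠ I*. Then as p_{I*} → 1, for each j ≠ I*, p_j/(1 - p_{I*}) → (θ_{I*} - θ_j)^{-2} / Σ_{i ≠ I*} (θ_{I*} - θ_i)^{-2}. -/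
open Filter Topology

/-! Balance says that `w_i p_i / (p_i + β)` does not depend on the suboptimal arm `i`, where
`w_i = (θ_{I*} - θ_i)²`. Hence `p_i / p_j = (w_j / w_i) (p_i + β) / (p_j + β)`, which tends to
`w_j / w_i` because every `p_i ≤ 1 - β` tends to `0`. Since the `p_i` sum to `1 - β`,
`p_j / (1 - β)` is the reciprocal of `∑_i p_i / p_j`, and so tends to `(∑_i w_j / w_i)⁻¹`. -/

theorem tendsto_div_sum_of_tendsto_div {α ι 𝕜 : Type*} [NormedField 𝕜] {l : Filter α}
    {f : α → ι → 𝕜} {c : ι → 𝕜} (s : Finset ι) (j : ι)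
    (h : ∀ i ∈ s, Tendsto (fun x => f x i / f x j) l (𝓝 (c i))) (hc : ∑ i ∈ s, c i ≠ 0) :
    Tendsto (fun x => f x j / ∑ i ∈ s, f x i) l (𝓝 (∑ i ∈ s, c i)⁻¹) := by
  have hrecip : ∀ x, f x j / ∑ i ∈ s, f x i = (∑ i ∈ s, f x i / f x j)⁻¹ := fun x => by
    rw [← Finset.sum_div, inv_div]
  simpa only [hrecip] using (tendsto_finsetSum s h).inv₀ hc

theorem tendsto_zero_of_tendsto_sum_zero {α ι : Type*} {l : Filter α} {f : α → ι → ℝ}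
    {s : Finset ι} {i : ι} (hi : i ∈ s) (hf : ∀ᶠ x in l, ∀ i ∈ s, 0 ≤ f x i)
    (h : Tendsto (fun x => ∑ i ∈ s, f x i) l (𝓝 0)) :
    Tendsto (fun x => f x i) l (𝓝 0) := by
  refine squeeze_zero' ?_ ?_ h
  · filter_upwards [hf] with x hx using hx i hi
  · filter_upwards [hf] with x hx using Finset.single_le_sum hx hi

theorem div_eq_of_gaussian_balance {σ b x y a c : ℝ} (hσ : σ ≠ 0) (hb : 0 < b) (hx : 0 < x)
    (hy : 0 < y) (ha : a ≠ 0) (h : a / (σ ^ 2 / b + σ ^ 2 / x) = c / (σ ^ 2 / b + σ ^ 2 / y)) :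
    x / y = c / a * ((x + b) / (y + b)) := by
  field_simp at h ⊢
  linear_combination h

theorem tendsto_div_of_gaussian_balance {α : Type*} {l : Filter α} {σ a c : ℝ} {b x y : α → ℝ}
    (hσ : σ ≠ 0) (ha : a ≠ 0) (hb : Tendsto b l (𝓝 1)) (hx : Tendsto x l (𝓝 0))
    (hy : Tendsto y l (𝓝 0)) (hpos : ∀ᶠ t in l, 0 < b t ∧ 0 < x t ∧ 0 < y t)
    (hbal : ∀ᶠ t in l,
      a / (σ ^ 2 / b t + σ ^ 2 / x t) = c / (σ ^ 2 / b t + σ ^ 2 / y t)) :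
    Tendsto (fun t => x t / y t) l (𝓝 (c / a)) := by
  have hlim := tendsto_const_nhds (x := c / a) |>.mul
    ((hx.add hb).div (hy.add hb) (by norm_num))
  rw [zero_add, div_one, mul_one] at hlim
  refine hlim.congr' ?_
  filter_upwards [hpos, hbal] with t ⟨hbt, hxt, hyt⟩ ht
  exact (div_eq_of_gaussian_balance hσ hbt hxt hyt ha ht).symm

/-- Gaussian information balance as `p_{I*} → 1`: if for each exploitation rate
`β ∈ (0,1)` the vector `p β` is a probability vector with `p β I* = β`, positive
off-`I*` entries, satisfying the Gaussian information-balance equations, then for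
each suboptimal arm `j`, `p_j/(1-β) → (θ_{I*}-θ_j)^{-2} / Σ_{i≠I*} (θ_{I*}-θ_i)^{-2}`
as `β → 1`. -/
theorem gaussian_balance_limit
    {k : ℕ} (θ : Fin k → ℝ) (Istar : Fin k) (σ : ℝ) (hσ : 0 < σ)
    (hbest : ∀ j, j ≠ Istar → θ j < θ Istar)
    (p : ℝ → Fin k → ℝ)
    (hI : ∀ β ∈ Set.Ioo (0:ℝ) 1, p β Istar = β)
    (hpos : ∀ β ∈ Set.Ioo (0:ℝ) 1, ∀ j, j ≠ Istar → 0 < p β j)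
    (hsum : ∀ β ∈ Set.Ioo (0:ℝ) 1, ∑ j, p β j = 1)
    (hbal : ∀ β ∈ Set.Ioo (0:ℝ) 1, ∀ i, i ≠ Istar → ∀ j, j ≠ Istar →
      (θ Istar - θ i)^2 / (σ^2 / p β Istar + σ^2 / p β i) =
      (θ Istar - θ j)^2 / (σ^2 / p β Istar + σ^2 / p β j)) :
    ∀ j, j ≠ Istar →
      Tendsto (fun β => p β j / (1 - β)) (nhdsWithin 1 (Set.Ioo (0:ℝ) 1))
        (nhds (((θ Istar - θ j)^2)⁻¹ /
          ∑ i ∈ Finset.univ.filter (· ≠ Istar), ((θ Istar - θ i)^2)⁻¹)) := by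
  intro j hj
  rw [Finset.filter_ne']
  set S := Finset.univ.erase Istar
  set w : Fin k → ℝ := fun i => (θ Istar - θ i) ^ 2
  have hmem : ∀ {i}, i ∈ S ↔ i ≠ Istar := by simp [S]
  have hw : ∀ i ∈ S, 0 < w i := fun i hi => by
    have := hbest i (hmem.1 hi)
    positivity
  have hβ : ∀ᶠ β in 𝓝[Set.Ioo (0:ℝ) 1] 1, β ∈ Set.Ioo (0:ℝ) 1 := self_mem_nhdsWithin
  have hβ1 : Tendsto (fun β : ℝ => β) (𝓝[Set.Ioo (0:ℝ) 1] 1) (𝓝 1) :=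
    tendsto_nhdsWithin_of_tendsto_nhds tendsto_id
  have hsumS : ∀ β ∈ Set.Ioo (0:ℝ) 1, ∑ i ∈ S, p β i = 1 - β := fun β hβ => by
    rw [eq_sub_iff_add_eq', ← hsum β hβ, ← Finset.add_sum_erase _ _ (Finset.mem_univ Istar),
      hI β hβ]
  have hsumS0 : Tendsto (fun β => ∑ i ∈ S, p β i) (𝓝[Set.Ioo (0:ℝ) 1] 1) (𝓝 0) :=
    (sub_self (1 : ℝ) ▸ tendsto_const_nhds.sub hβ1).congr'
      (hβ.mono fun β hβ => (hsumS β hβ).symm)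
  have hp0 : ∀ i ∈ S, Tendsto (fun β => p β i) (𝓝[Set.Ioo (0:ℝ) 1] 1) (𝓝 0) := fun i hi =>
    tendsto_zero_of_tendsto_sum_zero hi
      (hβ.mono fun β hβ i hi => (hpos β hβ i (hmem.1 hi)).le) hsumS0
  have hratio : ∀ i ∈ S, Tendsto (fun β => p β i / p β j) (𝓝[Set.Ioo (0:ℝ) 1] 1)
      (𝓝 (w j / w i)) := fun i hi =>
    tendsto_div_of_gaussian_balance hσ.ne' (hw i hi).ne' hβ1 (hp0 i hi) (hp0 j (hmem.2 hj))
      (hβ.mono fun β hβ => ⟨hβ.1, hpos β hβ i (hmem.1 hi), hpos β hβ j hj⟩)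
      (hβ.mono fun β hβ => by simpa only [hI β hβ] using hbal β hβ i (hmem.1 hi) j hj)
  have hc : ∑ i ∈ S, w j / w i ≠ 0 :=
    (Finset.sum_pos (fun i hi => div_pos (hw j (hmem.2 hj)) (hw i hi)) ⟨j, hmem.2 hj⟩).ne'
  have hlimit : (∑ i ∈ S, w j / w i)⁻¹ = (w j)⁻¹ / ∑ i ∈ S, (w i)⁻¹ := by
    simp only [div_eq_mul_inv, ← Finset.mul_sum, mul_inv]
  refine (hlimit ▸ tendsto_div_sum_of_tendsto_div S j hratio hc).congr' ?_
  filter_upwards [hβ] with β hβ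
  rw [hsumS β hβ]
end

section
/- Constancy of payoff under the skeptic's equilibrium mixture: in the setting of the Skeptic's Standoff game with equilibrium weights q*_j = C_j(θ)·Γ*/KL(θ_j, θ̄*_{I*,j}) over alternatives ϑ^{*j} (which modify only coordinates I* and j of θ to the common value θ̄*_{I*,j}), for every probability vector p on the k arms the mixed payoff equals the constant Γ*: Σ_{j≠I*} q*_j · [p_{I*}KL(θ_{I*},θ̄*_{I*,j}) + p_j KL(θ_j,θ̄*_{I*,j})] / (Σ_i p_i C_i(θ)) = Γ*. -/
/-- Constancy of payoff under the skeptic's equilibrium mixture: with weights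
`q*_j = C_j·Γ*/KL(θ_j, θ̄*_{I*,j})` over the alternatives `ϑ^{*j}` (which modify
only coordinates `I*` and `j` to the common value `θ̄*_{I*,j}`, so that only the
terms `p_{I*}KL(θ_{I*},·)` and `p_jKL(θ_j,·)` survive in the payoff), for every
probability vector `p` the mixed payoff equals the constant `Γ*`. -/
theorem payoff_constant_under_skeptic_mixture
    {k : ℕ} (θ : Fin k → ℝ) (Istar : Fin k)
    (C : Fin k → ℝ) (KL : ℝ → ℝ → ℝ) (hC : ∀ i, 0 < C i)
    (tb : Fin k → ℝ)
    (hKLpos : ∀ j, j ≠ Istar → 0 < KL (θ j) (tb j))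
    (hexp : ∑ j ∈ Finset.univ.filter (· ≠ Istar),
      (KL (θ Istar) (tb j) / C Istar) / (KL (θ j) (tb j) / C j) = 1)
    (Γ : ℝ)
    (hΓ : Γ * (∑ j ∈ Finset.univ.filter (· ≠ Istar), C j / KL (θ j) (tb j)) = 1) :
    ∀ p : Fin k → ℝ, (∀ i, 0 ≤ p i) → (∑ i, p i = 1) →
      ∑ j ∈ Finset.univ.filter (· ≠ Istar),
        (C j * Γ / KL (θ j) (tb j)) *
          ((p Istar * KL (θ Istar) (tb j) + p j * KL (θ j) (tb j))
            / (∑ i, p i * C i)) = Γ := by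
  intro p hp hsum
  set s := Finset.univ.filter (· ≠ Istar) with hs
  have hS : (0:ℝ) < ∑ i, p i * C i := by
    obtain ⟨i, hi⟩ : ∃ i, 0 < p i := by
      by_contra h
      push_neg at h
      have hz : ∀ i, p i = 0 := fun i => le_antisymm (h i) (hp i)
      simp [hz] at hsum
    exact Finset.sum_pos' (fun i _ => mul_nonneg (hp i) (hC i).le)
      ⟨i, Finset.mem_univ i, mul_pos hi (hC i)⟩
  have hSne := hS.ne'
  have key : ∀ j ∈ s, (C j * Γ / KL (θ j) (tb j)) *
      ((p Istar * KL (θ Istar) (tb j) + p j * KL (θ j) (tb j)) / (∑ i, p i * C i))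
      = Γ / (∑ i, p i * C i) *
        (p Istar * C Istar * ((KL (θ Istar) (tb j) / C Istar) / (KL (θ j) (tb j) / C j))
          + p j * C j) := by
    intro j hj
    have hjne : j ≠ Istar := by simpa [hs] using hj
    have h1 := (hKLpos j hjne).ne'
    have h2 := (hC j).ne'
    have h3 := (hC Istar).ne'
    field_simp
  rw [Finset.sum_congr rfl key, ← Finset.mul_sum]
  have hsplit2 : ∑ j ∈ s, (p Istar * C Istar *
      ((KL (θ Istar) (tb j) / C Istar) / (KL (θ j) (tb j) / C j)) + p j * C j)
      = p Istar * C Istar *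
        (∑ j ∈ s, (KL (θ Istar) (tb j) / C Istar) / (KL (θ j) (tb j) / C j))
        + ∑ j ∈ s, p j * C j := by
    rw [Finset.sum_add_distrib, Finset.mul_sum]
  rw [hsplit2, hexp, mul_one]
  have hsplit : p Istar * C Istar + ∑ j ∈ s, p j * C j = ∑ i, p i * C i := by
    rw [hs, Finset.filter_ne']
    exact Finset.add_sum_erase Finset.univ (fun i => p i * C i) (Finset.mem_univ Istar)
  rw [hsplit]
  field_simp
end
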